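/- Let β₁, β₂, δ₁, δ₂ ≥ 0 with β₁+δ₁ > 0, β₂+δ₂ > 0, α₁, α₂, γ₁, γ₂ > 0, |σ| < 1, 0 ≤ α < 1, and suppose the coefficients satisfy |A_n| ≤ (1−α)/(n(n−α)) for n ≥ 2 and |B_n| ≤ (1−α)/(n(n+α)) for n ≥ 1. If W_{(α₁,β₁),(γ₁,δ₁)}(1) + |σ| W_{(α₂,β₂),(γ₂,δ₂)}(1) ≤ 2, then ∑_{n=2}^∞ (n−α) Γ(α₁)Γ(γ₁)|A_n| / (Γ(α₁+(n−1)β₁)Γ(γ₁+(n−1)δ₁)) + |σ| ∑_{n=1}^∞ (n+α) Γ(α₂)Γ(γ₂)|B_n| / (Γ(α₂+(n−1)β₂)Γ(γ₂+(n−1)δ₂)) ≤ 1 − α. -/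

import Mathlib

/-!
The coefficient bounds give `(n - α)|Aₙ| ≤ (1 - α)/n ≤ 1 - α` and `(n + α)|Bₙ| ≤ 1 - α`, so the
sum is at most `(1 - α) (W₁(1) - 1 + |σ| W₂(1)) ≤ 1 - α` term by term. What has to be checked is
that the Wright series at `1` converge: for `y ≥ 4`, `Γ(y) = (y - 1)(y - 2)Γ(y - 2) ≥ (y - 1)(y - 2)`,
so the coefficients decay like `n⁻²`, while the other Gamma factor stays above the minimum of `Γ`
on `(0, ∞)`.
-/

/-- The normalized four-parameter Wright function
`W_{(a,b),(c,d)}(x) = x + ∑_{n=2}^∞ Γ(a)Γ(c) xⁿ / (Γ(a+(n-1)b)Γ(c+(n-1)d))`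
(as a function of a real variable, evaluated along the real axis). -/
noncomputable def wrightW (a b c d : ℝ) : ℝ → ℝ := fun x =>
  x + ∑' n : ℕ, Real.Gamma a * Real.Gamma c /
    (Real.Gamma (a + ((n : ℝ) + 1) * b) * Real.Gamma (c + ((n : ℝ) + 1) * d)) * x ^ (n + 2)

open Real Filter

lemma sub_one_mul_sub_two_le_Gamma {y : ℝ} (hy : 4 ≤ y) : (y - 1) * (y - 2) ≤ Gamma y := by
  have hΓ : 1 ≤ Gamma (y - 2) := Gamma_two ▸
    Gamma_strictMonoOn_Ici.monotoneOn (Set.mem_Ici.2 le_rfl) (Set.mem_Ici.2 (by linarith))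
      (by linarith)
  have hy' : Gamma y = (y - 1) * (y - 2) * Gamma (y - 2) := by
    calc Gamma y = Gamma (y - 2 + 1 + 1) := by ring_nf
      _ = (y - 1) * (y - 2) * Gamma (y - 2) := by
        rw [Gamma_add_one (by linarith), Gamma_add_one (by linarith)]
        ring
  rw [hy']
  exact le_mul_of_one_le_right (by nlinarith) hΓ

lemma summable_one_div_Gamma_add_mul (a : ℝ) {b : ℝ} (hb : 0 < b) :
    Summable fun n : ℕ => 1 / Gamma (a + n * b) := by
  refine .of_norm_bounded_eventually_nat
    ((summable_nat_pow_inv (p := 2)).2 one_lt_two |>.mul_left ((2 / b) ^ 2)) ?_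
  filter_upwards [(tendsto_natCast_atTop_atTop.atTop_mul_const hb).eventually_ge_atTop
    (max 4 (4 - 2 * a)), eventually_gt_atTop 0] with n hn hn0
  have hn' : 4 ≤ n * b ∧ 4 - 2 * a ≤ n * b := max_le_iff.1 hn
  have hsq : (n * b / 2) ^ 2 ≤ Gamma (a + n * b) :=
    calc (n * b / 2) ^ 2 ≤ (a + n * b - 1) * (a + n * b - 2) := by nlinarith
      _ ≤ Gamma (a + n * b) := sub_one_mul_sub_two_le_Gamma (by linarith)
  have hpos : 0 < (n * b / 2) ^ 2 := by positivity
  rw [norm_of_nonneg (one_div_nonneg.2 (hpos.trans_le hsq).le), one_div]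
  calc (Gamma (a + n * b))⁻¹ ≤ ((n * b / 2) ^ 2)⁻¹ := inv_anti₀ hpos hsq
    _ = (2 / b) ^ 2 * ((n : ℝ) ^ 2)⁻¹ := by field_simp

/-- `wrightCoeff a b c d (n - 1)` is the coefficient of `zⁿ` in `wrightW a b c d`. -/
noncomputable def wrightCoeff (a b c d x : ℝ) : ℝ :=
  Gamma a * Gamma c / (Gamma (a + x * b) * Gamma (c + x * d))

section wrightCoeff

variable {a b c d : ℝ}

lemma wrightCoeff_comm (a b c d x : ℝ) : wrightCoeff a b c d x = wrightCoeff c d a b x := by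
  simp only [wrightCoeff, mul_comm]

lemma wrightCoeff_zero (ha : 0 < a) (hc : 0 < c) : wrightCoeff a b c d 0 = 1 := by
  simp [wrightCoeff, (Gamma_pos_of_pos ha).ne', (Gamma_pos_of_pos hc).ne']

lemma wrightCoeff_nonneg (ha : 0 < a) (hc : 0 < c) (hb : 0 ≤ b) (hd : 0 ≤ d) {x : ℝ}
    (hx : 0 ≤ x) : 0 ≤ wrightCoeff a b c d x := by
  unfold wrightCoeff
  have := Gamma_pos_of_pos ha
  have := Gamma_pos_of_pos hc
  have := Gamma_pos_of_pos (show 0 < a + x * b by positivity)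
  have := Gamma_pos_of_pos (show 0 < c + x * d by positivity)
  positivity

lemma summable_wrightCoeff_of_pos (ha : 0 < a) (hb : 0 < b) (hc : 0 < c) (hd : 0 ≤ d) :
    Summable fun n : ℕ => wrightCoeff a b c d n := by
  obtain ⟨x₀, hx₀, hmin⟩ := exists_isMinOn_Gamma_Ioi
  have hΓx₀ : 0 < Gamma x₀ := Gamma_pos_of_pos (by linarith [hx₀.1])
  refine .of_nonneg_of_le (fun n => wrightCoeff_nonneg ha hc hb.le hd n.cast_nonneg) (fun n => ?_)
    ((summable_one_div_Gamma_add_mul a hb).mul_left (Gamma a * Gamma c / Gamma x₀))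
  have hΓan : 0 < Gamma (a + n * b) := Gamma_pos_of_pos (by positivity)
  have hΓcn : Gamma x₀ ≤ Gamma (c + n * d) := hmin (show 0 < c + n * d by positivity)
  calc wrightCoeff a b c d n ≤ Gamma a * Gamma c / (Gamma (a + n * b) * Gamma x₀) :=
        div_le_div_of_nonneg_left
          (mul_pos (Gamma_pos_of_pos ha) (Gamma_pos_of_pos hc)).le (by positivity)
          (mul_le_mul_of_nonneg_left hΓcn hΓan.le)
    _ = Gamma a * Gamma c / Gamma x₀ * (1 / Gamma (a + n * b)) := by field_simp

lemma summable_wrightCoeff (ha : 0 < a) (hc : 0 < c) (hb : 0 ≤ b) (hd : 0 ≤ d)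
    (hbd : 0 < b + d) :
    Summable fun n : ℕ => wrightCoeff a b c d n := by
  rcases hb.lt_or_eq with hb | rfl
  · exact summable_wrightCoeff_of_pos ha hb hc hd
  · simp_rw [wrightCoeff_comm a 0]
    exact summable_wrightCoeff_of_pos hc (by simpa using hbd) ha le_rfl

lemma wrightW_one (a b c d : ℝ) :
    wrightW a b c d 1 = 1 + ∑' n : ℕ, wrightCoeff a b c d (n + 1) := by
  simp [wrightW, wrightCoeff]

lemma tsum_wrightCoeff (ha : 0 < a) (hc : 0 < c)
    (hs : Summable fun n : ℕ => wrightCoeff a b c d n) :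
    ∑' n : ℕ, wrightCoeff a b c d n = wrightW a b c d 1 := by
  rw [hs.tsum_eq_zero_add, wrightW_one]
  push_cast
  rw [wrightCoeff_zero ha hc]

end wrightCoeff

lemma mul_le_of_le_div_mul {m k t c : ℝ} (hm : 1 ≤ m) (hk : 0 < k) (hc : 0 ≤ c)
    (ht : t ≤ c / (m * k)) : k * t ≤ c :=
  calc k * t ≤ k * (c / (m * k)) := mul_le_mul_of_nonneg_left ht hk.le
    _ = c / m := by field_simp
    _ ≤ c := div_le_self hc hm

lemma tsum_mul_mul_le {k w t : ℕ → ℝ} {c : ℝ} (hw : Summable w) (hw0 : ∀ n, 0 ≤ w n)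
    (hkt0 : ∀ n, 0 ≤ k n * t n) (hkt : ∀ n, k n * t n ≤ c) :
    ∑' n, k n * w n * t n ≤ c * ∑' n, w n := by
  have hle : ∀ n, k n * w n * t n ≤ c * w n := fun n => by
    rw [mul_right_comm]; exact mul_le_mul_of_nonneg_right (hkt n) (hw0 n)
  have hnonneg : ∀ n, 0 ≤ k n * w n * t n := fun n => by
    rw [mul_right_comm]; exact mul_nonneg (hkt0 n) (hw0 n)
  have hcw : Summable fun n => c * w n := hw.mul_left c
  rw [← tsum_mul_left]
  exact Summable.tsum_le_tsum hle (.of_nonneg_of_le hnonneg hle hcw) hcw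

theorem Lf_SRH_coefficient_estimate_general (α₁ β₁ γ₁ δ₁ α₂ β₂ γ₂ δ₂ α : ℝ) (σ : ℂ) (A B : ℕ → ℂ)
    (hβ₁ : 0 ≤ β₁) (hδ₁ : 0 ≤ δ₁) (hβδ₁ : 0 < β₁ + δ₁)
    (hβ₂ : 0 ≤ β₂) (hδ₂ : 0 ≤ δ₂) (hβδ₂ : 0 < β₂ + δ₂)
    (hα₁ : 0 < α₁) (hγ₁ : 0 < γ₁) (hα₂ : 0 < α₂) (hγ₂ : 0 < γ₂)
    (hα0 : 0 ≤ α) (hα1 : α < 1)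
    (hA : ∀ n : ℕ, 2 ≤ n → ‖A n‖ ≤ (1 - α) / ((n : ℝ) * ((n : ℝ) - α)))
    (hB : ∀ n : ℕ, 1 ≤ n → ‖B n‖ ≤ (1 - α) / ((n : ℝ) * ((n : ℝ) + α)))
    (hyp : wrightW α₁ β₁ γ₁ δ₁ 1 + ‖σ‖ * wrightW α₂ β₂ γ₂ δ₂ 1 ≤ 2) :
    (∑' n : ℕ, ((n : ℝ) + 2 - α) *
        (Real.Gamma α₁ * Real.Gamma γ₁ /
          (Real.Gamma (α₁ + ((n : ℝ) + 1) * β₁) * Real.Gamma (γ₁ + ((n : ℝ) + 1) * δ₁))) * ‖A (n + 2)‖)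
      + ‖σ‖ * ∑' n : ℕ, ((n : ℝ) + 1 + α) *
        (Real.Gamma α₂ * Real.Gamma γ₂ /
          (Real.Gamma (α₂ + (n : ℝ) * β₂) * Real.Gamma (γ₂ + (n : ℝ) * δ₂))) * ‖B (n + 1)‖
      ≤ 1 - α := by
  have hs₁ := summable_wrightCoeff hα₁ hγ₁ hβ₁ hδ₁ hβδ₁
  have hs₂ := summable_wrightCoeff hα₂ hγ₂ hβ₂ hδ₂ hβδ₂
  have hA' (n : ℕ) : ((n : ℝ) + 2 - α) * ‖A (n + 2)‖ ≤ 1 - α :=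
    mul_le_of_le_div_mul (m := n + 2) (by linarith [n.cast_nonneg (α := ℝ)])
      (by linarith [n.cast_nonneg (α := ℝ)]) (by linarith)
      (by simpa [add_sub_right_comm] using hA (n + 2) (by omega))
  have hB' (n : ℕ) : ((n : ℝ) + 1 + α) * ‖B (n + 1)‖ ≤ 1 - α :=
    mul_le_of_le_div_mul (m := n + 1) (by linarith [n.cast_nonneg (α := ℝ)])
      (by linarith [n.cast_nonneg (α := ℝ)]) (by linarith)
      (by simpa using hB (n + 1) (by omega))
  have h₁ := tsum_mul_mul_le (w := fun n : ℕ => wrightCoeff α₁ β₁ γ₁ δ₁ (n + 1))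
    (by simpa using (summable_nat_add_iff 1).2 hs₁)
    (fun n => wrightCoeff_nonneg hα₁ hγ₁ hβ₁ hδ₁ (by positivity))
    (fun n => mul_nonneg (by linarith [n.cast_nonneg (α := ℝ)]) (norm_nonneg _)) hA'
  have h₂ := tsum_mul_mul_le (w := fun n : ℕ => wrightCoeff α₂ β₂ γ₂ δ₂ n) hs₂
    (fun n => wrightCoeff_nonneg hα₂ hγ₂ hβ₂ hδ₂ n.cast_nonneg)
    (fun n => mul_nonneg (by linarith [n.cast_nonneg (α := ℝ)]) (norm_nonneg _)) hB'
  rw [tsum_wrightCoeff hα₂ hγ₂ hs₂] at h₂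
  rw [wrightW_one] at hyp
  calc _ ≤ (1 - α) * ∑' n : ℕ, wrightCoeff α₁ β₁ γ₁ δ₁ (n + 1)
        + ‖σ‖ * ((1 - α) * wrightW α₂ β₂ γ₂ δ₂ 1) :=
        add_le_add h₁ (mul_le_mul_of_nonneg_left h₂ (norm_nonneg σ))
    _ = (1 - α) * (∑' n : ℕ, wrightCoeff α₁ β₁ γ₁ δ₁ (n + 1)
          + ‖σ‖ * wrightW α₂ β₂ γ₂ δ₂ 1) := by ring
    _ ≤ (1 - α) * 1 := mul_le_mul_of_nonneg_left (by linarith) (by linarith)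
    _ = 1 - α := mul_one _

/-- if f ∈ SRH(α) (so the coefficient bounds hold) and
W₁(1) + |σ| W₂(1) ≤ 2 then L(f) satisfies the SRH(α) coefficient condition. -/
theorem Lf_SRH_coefficient_estimate (α₁ β₁ γ₁ δ₁ α₂ β₂ γ₂ δ₂ α : ℝ) (σ : ℂ) (A B : ℕ → ℂ)
    (hβ₁ : 0 ≤ β₁) (hδ₁ : 0 ≤ δ₁) (hβδ₁ : 0 < β₁ + δ₁)
    (hβ₂ : 0 ≤ β₂) (hδ₂ : 0 ≤ δ₂) (hβδ₂ : 0 < β₂ + δ₂)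
    (hα₁ : 0 < α₁) (hγ₁ : 0 < γ₁) (hα₂ : 0 < α₂) (hγ₂ : 0 < γ₂)
    (hσ : ‖σ‖ < 1) (hα0 : 0 ≤ α) (hα1 : α < 1)
    (hA : ∀ n : ℕ, 2 ≤ n → ‖A n‖ ≤ (1 - α) / ((n : ℝ) * ((n : ℝ) - α)))
    (hB : ∀ n : ℕ, 1 ≤ n → ‖B n‖ ≤ (1 - α) / ((n : ℝ) * ((n : ℝ) + α)))
    (hyp : wrightW α₁ β₁ γ₁ δ₁ 1 + ‖σ‖ * wrightW α₂ β₂ γ₂ δ₂ 1 ≤ 2) :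
    (∑' n : ℕ, ((n : ℝ) + 2 - α) *
        (Real.Gamma α₁ * Real.Gamma γ₁ /
          (Real.Gamma (α₁ + ((n : ℝ) + 1) * β₁) * Real.Gamma (γ₁ + ((n : ℝ) + 1) * δ₁))) * ‖A (n + 2)‖)
      + ‖σ‖ * ∑' n : ℕ, ((n : ℝ) + 1 + α) *
        (Real.Gamma α₂ * Real.Gamma γ₂ /
          (Real.Gamma (α₂ + (n : ℝ) * β₂) * Real.Gamma (γ₂ + (n : ℝ) * δ₂))) * ‖B (n + 1)‖
      ≤ 1 - α :=
  Lf_SRH_coefficient_estimate_general α₁ β₁ γ₁ δ₁ α₂ β₂ γ₂ δ₂ α σ A B hβ₁ hδ₁ hβδ₁ hβ₂ hδ₂ hβδ₂ hα₁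
    hγ₁ hα₂ hγ₂ hα0 hα1 hA hB hyp
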